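/- Let G_k = (N_k, T, P_k, S) be a context-free grammar in Dyck normal form with N_k = {S, [_1, ..., [_k, ]_1, ..., ]_k}, and suppose P_k contains no rule of the form S → t with t ∈ T ∪ {λ}. Then there exists a regular language R over {[_1, ..., [_k, ]_1, ..., ]_k} such that D_k ∩ R = 𝓛(G_k), where 𝓛(G_k) is the trace-language of G_k; consequently L(G_k) = φ(D_k ∩ R), where φ is the homomorphism mapping each bracket rewritten by a rule to two nonterminals to λ and each bracket N rewritten by a rule N → t to t. -/

import Mathlib

namespace CS

/-! ### Brackets and Dyck languages -/

/-- A bracket over `k` letters: `(i, true)` is the left bracket `[ᵢ` and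
`(i, false)` is the right bracket `]ᵢ`. -/
abbrev Bracket (k : ℕ) : Type := Fin k × Bool

/-- The one-sided Dyck language `D_k` over `k` letters, i.e. the language generated by the
context-free grammar with rules `S → [ᵢ S ]ᵢ`, `S → SS`, `S → [ᵢ ]ᵢ` for `1 ≤ i ≤ k`. -/
inductive IsDyck {k : ℕ} : List (Bracket k) → Prop
  | pair (i : Fin k) : IsDyck [(i, true), (i, false)]
  | wrap (i : Fin k) {w : List (Bracket k)} (hw : IsDyck w) :
      IsDyck ((i, true) :: w ++ [(i, false)])
  | concat {u v : List (Bracket k)} (hu : IsDyck u) (hv : IsDyck v) : IsDyck (u ++ v)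

/-- The number of left (open) brackets in `w`. -/
def opens {k : ℕ} (w : List (Bracket k)) : ℕ := (w.filter fun b => b.2).length

/-- The number of right (close) brackets in `w`. -/
def closes {k : ℕ} (w : List (Bracket k)) : ℕ := (w.filter fun b => !b.2).length

/-- A string is balanced if it has as many left brackets as right brackets and every prefix
has at least as many left brackets as right brackets.  (This is the balancedness of the image
of the string under the homomorphism `h` sending every `[ᵢ` to `[₁` and every `]ᵢ` to `]₁`.) -/
def IsBalanced {k : ℕ} (w : List (Bracket k)) : Prop :=
  opens w = closes w ∧ ∀ p : List (Bracket k), p <+: w → closes p ≤ opens p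

/-- The substring `w_{i:j}` of `w` starting at the `i`-th position and ending at the `j`-th
position (1-indexed, inclusive). -/
def substr {α : Type*} (w : List α) (i j : ℕ) : List α := (w.drop (i - 1)).take (j - i + 1)

/-- `(i, j)` is a matched pair of `w` if `1 ≤ i ≤ j ≤ |w|` and `h(w_{i:j})` is balanced. -/
def MatchedPair {k : ℕ} (w : List (Bracket k)) (i j : ℕ) : Prop :=
  1 ≤ i ∧ i ≤ j ∧ j ≤ w.length ∧ IsBalanced (substr w i j)

/-- `(i, j)` is a nested pair of `w` if it is a matched pair and either `j = i + 1` or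
`(i + 1, j - 1)` is a matched pair. -/
def NestedPair {k : ℕ} (w : List (Bracket k)) (i j : ℕ) : Prop :=
  MatchedPair w i j ∧ (j = i + 1 ∨ MatchedPair w (i + 1) (j - 1))

/-- The homomorphism `h_{k'}` keeping only the brackets indexed by `k'` (sent to `[₁`/`]₁`)
and erasing all other brackets. -/
def projIdx {k : ℕ} (i : Fin k) (w : List (Bracket k)) : List (Bracket 1) :=
  (w.filter fun b => decide (b.1 = i)).map fun b => ((0 : Fin 1), b.2)

/-! ### Grammars: Chomsky and Dyck normal forms -/

variable {T : Type}

/-- Chomsky normal form: every rule has the form `A → BC` or `A → a`, except possibly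
`S → λ`, and the initial nonterminal never occurs on the right-hand side of a rule. -/
def IsChomskyNF (g : ContextFreeGrammar T) : Prop :=
  (∀ r ∈ g.rules,
      (∃ B C : g.NT, r.output = [Symbol.nonterminal B, Symbol.nonterminal C]) ∨
      (∃ a : T, r.output = [Symbol.terminal a]) ∨
      (r.input = g.initial ∧ r.output = [])) ∧
  (∀ r ∈ g.rules, Symbol.nonterminal g.initial ∉ r.output)

/-- Dyck normal form (Definition 1.1):
(1) Chomsky normal form;
(2) if `A → a` with `A ≠ S` then no other rule rewrites `A`;
(3) if some rule `X → AB` is in `P` then no rule of the form `X' → B'A` is in `P`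
    (equivalently, no nonterminal occurs both as a left member and as a right member of
    right-hand sides of two-nonterminal rules);
(4) for rules `X → AB` and `X' → A'B` one has `A = A'`, and for rules `X → AB` and
    `X' → AB'` one has `B = B'`. -/
def IsDyckNF (g : ContextFreeGrammar T) : Prop :=
  IsChomskyNF g ∧
  (∀ r ∈ g.rules, ∀ a : T, r.output = [Symbol.terminal a] → r.input ≠ g.initial →
      ∀ r' ∈ g.rules, r'.input = r.input → r' = r) ∧
  (∀ r ∈ g.rules, ∀ r' ∈ g.rules, ∀ A B B' : g.NT,
      r.output = [Symbol.nonterminal A, Symbol.nonterminal B] →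
      r'.output ≠ [Symbol.nonterminal B', Symbol.nonterminal A]) ∧
  (∀ r ∈ g.rules, ∀ r' ∈ g.rules, ∀ A A' B B' : g.NT,
      r.output = [Symbol.nonterminal A, Symbol.nonterminal B] →
      r'.output = [Symbol.nonterminal A', Symbol.nonterminal B'] →
      (B = B' → A = A') ∧ (A = A' → B = B'))

/-- Extension of a map on nonterminals to a map on symbols, acting as the identity on
terminal symbols. -/
def mapSym {N N' : Type*} (f : N → N') : Symbol T N → Symbol T N'
  | .terminal t => .terminal t
  | .nonterminal A => .nonterminal (f A)

/-- One leftmost derivation step rewriting the (leftmost) nonterminal `A`: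
everything to the left of the rewritten occurrence of `A` is terminal. -/
def LeftmostStep (g : ContextFreeGrammar T) (u v : List (Symbol T g.NT)) (A : g.NT) : Prop :=
  ∃ r ∈ g.rules, r.input = A ∧ ∃ (p : List T) (s : List (Symbol T g.NT)),
    u = p.map Symbol.terminal ++ Symbol.nonterminal A :: s ∧
    v = p.map Symbol.terminal ++ r.output ++ s

/-- One leftmost derivation step. -/
def LeftmostProduces (g : ContextFreeGrammar T) (u v : List (Symbol T g.NT)) : Prop :=
  ∃ A : g.NT, LeftmostStep g u v A

/-- `LmTrace g u v l` : there is a leftmost derivation in `g` from `u` to `v` whose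
consecutively rewritten nonterminals are listed (in order) in `l`. -/
inductive LmTrace (g : ContextFreeGrammar T) :
    List (Symbol T g.NT) → List (Symbol T g.NT) → List g.NT → Prop
  | refl (u : List (Symbol T g.NT)) : LmTrace g u u []
  | tail {u v w : List (Symbol T g.NT)} {l : List g.NT} {A : g.NT}
      (huv : LmTrace g u v l) (hvw : LeftmostStep g v w A) : LmTrace g u w (l ++ [A])

/-- `t` is the trace-word of the terminal word `w` associated with some leftmost derivation of
`w` in `g`: the concatenation of the nonterminals consecutively rewritten in the derivation,
excluding the axiom (which is the first rewritten nonterminal).  Trace-words are only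
associated with derivations `S ⇒ u₁ ⇒ ⋯ ⇒ u_{2n-1} = w` with `n ≥ 2`, i.e. `t ≠ []`. -/
def IsTraceWord (g : ContextFreeGrammar T) (w : List T) (t : List g.NT) : Prop :=
  t ≠ [] ∧ LmTrace g [Symbol.nonterminal g.initial] (w.map Symbol.terminal) (g.initial :: t)

/-- `A` is rewritten by a terminal rule `A → t` (i.e. `φ(A) ∈ T`). -/
def RewritesToTerminal (g : ContextFreeGrammar T) (A : g.NT) : Prop :=
  ∃ r ∈ g.rules, r.input = A ∧ ∃ t : T, r.output = [Symbol.terminal t]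

/-- The rule `A → a` belongs to the grammar. -/
def TerminalRule (g : ContextFreeGrammar T) (A : g.NT) (a : T) : Prop :=
  ∃ r ∈ g.rules, r.input = A ∧ r.output = [Symbol.terminal a]

/-- Linear grammar: all rules are of the forms `X → λ`, `X → t`, `X → tY`, `X → Yt`,
`X → t₁Yt₂`. -/
def IsLinear (g : ContextFreeGrammar T) : Prop :=
  ∀ r ∈ g.rules,
    r.output = [] ∨
    (∃ t : T, r.output = [Symbol.terminal t]) ∨
    (∃ (t : T) (Y : g.NT), r.output = [Symbol.terminal t, Symbol.nonterminal Y]) ∨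
    (∃ (t : T) (Y : g.NT), r.output = [Symbol.nonterminal Y, Symbol.terminal t]) ∨
    (∃ (t₁ t₂ : T) (Y : g.NT),
      r.output = [Symbol.terminal t₁, Symbol.nonterminal Y, Symbol.terminal t₂])

/-- Linear-Dyck normal form: Dyck normal form with `N⁽³⁾ = ∅`, i.e. in every
two-nonterminal rule `X → AB` at least one of `A`, `B` is rewritten by a terminal rule. -/
def IsLinearDyckNF (g : ContextFreeGrammar T) : Prop :=
  IsDyckNF g ∧
  ∀ r ∈ g.rules, ∀ A B : g.NT,
    r.output = [Symbol.nonterminal A, Symbol.nonterminal B] →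
    (RewritesToTerminal g A ∨ RewritesToTerminal g B)

/-- `(A, B)` is a pairwise pair of brackets in `N⁽¹⁾`: it occurs as the right-hand side of a
two-nonterminal rule and both members are rewritten by terminal rules. -/
def IsN1Pair (g : ContextFreeGrammar T) (A B : g.NT) : Prop :=
  (∃ r ∈ g.rules, r.output = [Symbol.nonterminal A, Symbol.nonterminal B]) ∧
  RewritesToTerminal g A ∧ RewritesToTerminal g B

/-- `C` is a bracket of some pair in `N⁽¹⁾`. -/
def IsN1Bracket (g : ContextFreeGrammar T) (C : g.NT) : Prop :=
  ∃ A B : g.NT, IsN1Pair g A B ∧ (C = A ∨ C = B)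

/-- The grammar over terminals `T` whose nonterminals are the axiom `S` (`none`) together
with the `2k` brackets `[₁, …, [ₖ, ]₁, …, ]ₖ`, with the given rules. -/
abbrev bracketGrammar (k : ℕ) (rs : Finset (ContextFreeRule T (Option (Bracket k)))) :
    ContextFreeGrammar T :=
  ⟨Option (Bracket k), none, rs⟩

/-!
A derivation tree of `G_k` is binary: its inner nodes are rewritten by rules `X → [ᵢ ]ᵢ` and
its leaves by rules `X → a`, and the trace-word of a leftmost derivation lists the nodes other
than the root in preorder. The preorder listing of such a tree is a Dyck word, and a Dyck word
determines the shape of the tree. Hence a Dyck word is a trace-word exactly when every symbol is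
allowed by the one before it: `[ᵢ` may follow `X` only if `X → [ᵢ ]ᵢ` is a rule (it is the left
child of `X`), `]ᵢ` may follow `X` only if `X` is rewritten to a terminal (`X` is a leaf), the
first symbol follows `S` and the last one is a leaf. These conditions are local, so a finite
automaton remembering the last symbol read checks them. Applying `φ` to a trace-word reads off
the terminals at the leaves, because in Dyck normal form a bracket rewritten by a pair rule has
no terminal rule.
-/

section Dyck

variable {k : ℕ}

/-- `D_k ∪ {λ}`, generated by the unambiguous grammar `S → λ | [ᵢ S ]ᵢ S`. -/
inductive IsDyckOrNil : List (Bracket k) → Prop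
  | nil : IsDyckOrNil []
  | node (i : Fin k) {d₁ d₂ : List (Bracket k)} (h₁ : IsDyckOrNil d₁)
      (h₂ : IsDyckOrNil d₂) :
      IsDyckOrNil ((i, true) :: d₁ ++ (i, false) :: d₂)

lemma IsDyckOrNil.append {u v : List (Bracket k)} (hu : IsDyckOrNil u) (hv : IsDyckOrNil v) :
    IsDyckOrNil (u ++ v) := by
  induction hu with
  | nil => exact hv
  | node i _ _ _ ih₂ => simpa using IsDyckOrNil.node i ‹_› ih₂

lemma IsDyck.isDyckOrNil {d : List (Bracket k)} (h : IsDyck d) : IsDyckOrNil d := by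
  induction h with
  | pair i => exact .node i .nil .nil
  | wrap i _ ih => simpa using IsDyckOrNil.node i ih .nil
  | concat _ _ ihu ihv => exact ihu.append ihv

lemma IsDyck.ne_nil {d : List (Bracket k)} (h : IsDyck d) : d ≠ [] := by
  induction h <;> simp_all

lemma isDyckOrNil_iff {d : List (Bracket k)} : IsDyckOrNil d ↔ d = [] ∨ IsDyck d := by
  refine ⟨fun h => ?_, fun h => h.elim (· ▸ .nil) IsDyck.isDyckOrNil⟩
  induction h with
  | nil => exact .inl rfl
  | node i _ _ ih₁ ih₂ =>
    refine .inr ?_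
    rcases ih₁ with rfl | h₁ <;> rcases ih₂ with rfl | h₂
    · exact .pair i
    · simpa using (IsDyck.pair i).concat h₂
    · exact .wrap i h₁
    · simpa using (IsDyck.wrap i h₁).concat h₂

end Dyck

section Derivation

variable {k : ℕ} (rs : Finset (ContextFreeRule T (Option (Bracket k))))

def HasPairRule (X : Option (Bracket k)) (i : Fin k) : Prop :=
  ∃ r ∈ rs, r.input = X ∧
    r.output = [Symbol.nonterminal (some (i, true)), Symbol.nonterminal (some (i, false))]

def PairOrTerminalRules : Prop :=
  ∀ r ∈ rs,
    (∃ i : Fin k, r.output =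
      [Symbol.nonterminal (some (i, true)), Symbol.nonterminal (some (i, false))]) ∨
    (∃ a : T, r.output = [Symbol.terminal a])

/-- `Derivation rs X d w`: `X` derives `w` by a derivation tree whose nodes other than the root,
listed in preorder, spell `d`. -/
inductive Derivation : Option (Bracket k) → List (Bracket k) → List T → Prop
  | terminal {X : Option (Bracket k)} {a : T} (h : TerminalRule (bracketGrammar k rs) X a) :
      Derivation X [] [a]
  | pair {X : Option (Bracket k)} {i : Fin k} {d₁ d₂ : List (Bracket k)} {w₁ w₂ : List T}
      (h : HasPairRule rs X i) (h₁ : Derivation (some (i, true)) d₁ w₁)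
      (h₂ : Derivation (some (i, false)) d₂ w₂) :
      Derivation X ((i, true) :: d₁ ++ (i, false) :: d₂) (w₁ ++ w₂)

def Follows : Option (Bracket k) → Bracket k → Prop
  | X, (i, true) => HasPairRule rs X i
  | X, (_, false) => RewritesToTerminal (bracketGrammar k rs) X

def Admissible : Option (Bracket k) → List (Bracket k) → Prop
  | X, [] => RewritesToTerminal (bracketGrammar k rs) X
  | X, c :: d => Follows rs X c ∧ Admissible (some c) d

variable {rs}

lemma admissible_append_close_iff {X : Option (Bracket k)} {i : Fin k}
    {d e : List (Bracket k)} :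
    Admissible rs X (d ++ (i, false) :: e) ↔
      Admissible rs X d ∧ Admissible rs (some (i, false)) e := by
  induction d generalizing X with
  | nil => rfl
  | cons c d ih => simp only [List.cons_append, Admissible, ih, and_assoc]

lemma admissible_node_iff {X : Option (Bracket k)} {i : Fin k} {d₁ d₂ : List (Bracket k)} :
    Admissible rs X ((i, true) :: d₁ ++ (i, false) :: d₂) ↔
      HasPairRule rs X i ∧ Admissible rs (some (i, true)) d₁ ∧
        Admissible rs (some (i, false)) d₂ := by
  rw [List.cons_append, Admissible, admissible_append_close_iff]
  rfl

lemma Derivation.isDyckOrNil {X : Option (Bracket k)} {d : List (Bracket k)} {w : List T}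
    (h : Derivation rs X d w) : IsDyckOrNil d := by
  induction h with
  | terminal => exact .nil
  | pair _ _ _ ih₁ ih₂ => exact .node _ ih₁ ih₂

lemma Derivation.admissible {X : Option (Bracket k)} {d : List (Bracket k)} {w : List T}
    (h : Derivation rs X d w) : Admissible rs X d := by
  induction h with
  | terminal h =>
    obtain ⟨r, hr, hri, hra⟩ := h
    exact ⟨r, hr, hri, _, hra⟩
  | pair h _ _ ih₁ ih₂ => exact admissible_node_iff.2 ⟨h, ih₁, ih₂⟩

lemma exists_derivation_of_admissible {X : Option (Bracket k)} {d : List (Bracket k)}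
    (hd : IsDyckOrNil d) (hX : Admissible rs X d) : ∃ w, Derivation rs X d w := by
  induction hd generalizing X with
  | nil =>
    obtain ⟨r, hr, hri, a, hra⟩ := hX
    exact ⟨[a], .terminal ⟨r, hr, hri, hra⟩⟩
  | node i _ _ ih₁ ih₂ =>
    obtain ⟨hX, h₁, h₂⟩ := admissible_node_iff.1 hX
    obtain ⟨w₁, hw₁⟩ := ih₁ h₁
    obtain ⟨w₂, hw₂⟩ := ih₂ h₂
    exact ⟨w₁ ++ w₂, .pair hX hw₁ hw₂⟩

lemma exists_derivation_iff {X : Option (Bracket k)} {d : List (Bracket k)} :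
    (∃ w, Derivation rs X d w) ↔ IsDyckOrNil d ∧ Admissible rs X d :=
  ⟨fun ⟨_, h⟩ => ⟨h.isDyckOrNil, h.admissible⟩,
    fun ⟨hd, hX⟩ => exists_derivation_of_admissible hd hX⟩

end Derivation

section Automaton

variable {k : ℕ} (rs : Finset (ContextFreeRule T (Option (Bracket k))))

open Classical in
/-- The state `some X` remembers the last symbol read (`X = none` before the first one);
`none` is a dead state. -/
noncomputable def traceDFA : DFA (Bracket k) (Option (Option (Bracket k))) where
  step q c := q.bind fun X => if Follows rs X c then some (some c) else none
  start := some none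
  accept := {q | ∃ X, q = some X ∧ RewritesToTerminal (bracketGrammar k rs) X}

variable {rs}

lemma traceDFA_evalFrom_none (d : List (Bracket k)) : (traceDFA rs).evalFrom none d = none := by
  induction d with
  | nil => rfl
  | cons c d ih => exact ih

lemma traceDFA_evalFrom_mem_accept_iff {X : Option (Bracket k)} {d : List (Bracket k)} :
    (traceDFA rs).evalFrom (some X) d ∈ (traceDFA rs).accept ↔ Admissible rs X d := by
  induction d generalizing X with
  | nil => simp [traceDFA, Admissible]
  | cons c d ih =>
    by_cases hc : Follows rs X c
    · have hstep : (traceDFA rs).step (some X) c = some (some c) := if_pos hc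
      rw [DFA.evalFrom_cons, hstep, ih]
      simp [Admissible, hc]
    · have hstep : (traceDFA rs).step (some X) c = none := if_neg hc
      rw [DFA.evalFrom_cons, hstep, traceDFA_evalFrom_none]
      simp [traceDFA, Admissible, hc]

lemma mem_traceDFA_accepts_iff {d : List (Bracket k)} :
    d ∈ (traceDFA rs).accepts ↔ Admissible rs none d :=
  traceDFA_evalFrom_mem_accept_iff

end Automaton

section LeftmostTraces

variable {g : ContextFreeGrammar T}

lemma LmTrace.single {u v : List (Symbol T g.NT)} {A : g.NT} (h : LeftmostStep g u v A) :
    LmTrace g u v [A] :=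
  .tail (.refl u) h

lemma LmTrace.trans {u v w : List (Symbol T g.NT)} {l l' : List g.NT} (h : LmTrace g u v l)
    (h' : LmTrace g v w l') : LmTrace g u w (l ++ l') := by
  induction h' with
  | refl => simpa using h
  | tail _ hvw ih => simpa using ih.tail hvw

lemma LmTrace.derives {u v : List (Symbol T g.NT)} {l : List g.NT} (h : LmTrace g u v l) :
    g.Derives u v := by
  induction h with
  | refl => exact .refl _
  | tail _ hvw ih =>
    obtain ⟨r, hr, hri, p, s, rfl, rfl⟩ := hvw
    refine ih.trans_produces ⟨r, hr, ?_⟩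
    rw [ContextFreeRule.rewrites_iff]
    exact ⟨p.map Symbol.terminal, s, by simp [hri], by simp⟩

lemma LmTrace.eq_nil_or_exists_cons {u v : List (Symbol T g.NT)} {l : List g.NT}
    (h : LmTrace g u v l) :
    (l = [] ∧ u = v) ∨
      ∃ A l' u', l = A :: l' ∧ LeftmostStep g u u' A ∧ LmTrace g u' v l' := by
  induction h with
  | refl => exact .inl ⟨rfl, rfl⟩
  | tail _ hvw ih =>
    rcases ih with ⟨rfl, rfl⟩ | ⟨B, l', u', rfl, hstep, htr⟩
    · exact .inr ⟨_, [], _, rfl, hvw, .refl _⟩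
    · exact .inr ⟨B, _, u', rfl, hstep, htr.tail hvw⟩

lemma map_terminal_append_cons_inj {N : Type*} {p p' : List T} {X X' : N}
    {s s' : List (Symbol T N)}
    (h : p.map Symbol.terminal ++ Symbol.nonterminal X :: s =
      p'.map Symbol.terminal ++ Symbol.nonterminal X' :: s') :
    p = p' ∧ X = X' ∧ s = s' := by
  induction p generalizing p' with
  | nil => cases p' <;> simp_all
  | cons a p ih =>
    cases p' with
    | nil => simp at h
    | cons a' p' =>
      simp only [List.map_cons, List.cons_append, List.cons.injEq, Symbol.terminal.injEq] at h
      obtain ⟨hp, rfl, rfl⟩ := ih h.2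
      exact ⟨by rw [h.1, hp], rfl, rfl⟩

lemma map_terminal_append_cons_ne {N : Type*} (p : List T) (X : N) (s : List (Symbol T N))
    (w : List T) :
    p.map Symbol.terminal ++ Symbol.nonterminal X :: s ≠ w.map Symbol.terminal := by
  intro h
  have : Symbol.nonterminal X ∈ w.map (Symbol.terminal (N := N)) := h ▸ by simp
  simp at this

lemma LmTrace.eq_of_map_terminal {w : List T} {v : List (Symbol T g.NT)} {l : List g.NT}
    (h : LmTrace g (w.map Symbol.terminal) v l) : l = [] ∧ v = w.map Symbol.terminal := by
  induction h with
  | refl => exact ⟨rfl, rfl⟩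
  | tail _ hvw ih =>
    obtain ⟨-, rfl⟩ := ih
    obtain ⟨-, -, -, p, s, hv, -⟩ := hvw
    exact absurd hv.symm (map_terminal_append_cons_ne p _ s w)

lemma LmTrace.exists_first_rule {p w : List T} {X : g.NT} {s : List (Symbol T g.NT)}
    {l : List g.NT}
    (h : LmTrace g (p.map Symbol.terminal ++ Symbol.nonterminal X :: s) (w.map Symbol.terminal) l) :
    ∃ r ∈ g.rules, r.input = X ∧ ∃ l', l = X :: l' ∧
      LmTrace g (p.map Symbol.terminal ++ r.output ++ s) (w.map Symbol.terminal) l' := by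
  rcases h.eq_nil_or_exists_cons with
    ⟨-, h⟩ | ⟨A, l', u', rfl, ⟨r, hr, hri, p', s', hu, rfl⟩, h⟩
  · exact absurd h (map_terminal_append_cons_ne p X s w)
  · obtain ⟨rfl, rfl, rfl⟩ := map_terminal_append_cons_inj hu
    exact ⟨r, hr, hri, l', rfl, h⟩

end LeftmostTraces

section TraceWords

variable {k : ℕ} {rs : Finset (ContextFreeRule T (Option (Bracket k)))}

lemma Derivation.lmTrace {X : Option (Bracket k)} {d : List (Bracket k)} {w : List T}
    (h : Derivation rs X d w) (p : List T) (s : List (Symbol T (Option (Bracket k)))) :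
    LmTrace (bracketGrammar k rs) (p.map Symbol.terminal ++ Symbol.nonterminal X :: s)
      ((p ++ w).map Symbol.terminal ++ s) (X :: d.map some) := by
  induction h generalizing p s with
  | terminal h =>
    obtain ⟨r, hr, hri, hra⟩ := h
    exact .single ⟨r, hr, hri, p, s, rfl, by simp [hra]⟩
  | @pair X i d₁ d₂ w₁ w₂ h _ _ ih₁ ih₂ =>
    obtain ⟨r, hr, hri, hro⟩ := h
    have hstep : LmTrace (bracketGrammar k rs) (p.map Symbol.terminal ++ Symbol.nonterminal X :: s)
        (p.map Symbol.terminal ++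
          Symbol.nonterminal (some (i, true)) :: Symbol.nonterminal (some (i, false)) :: s) [X] :=
      .single ⟨r, hr, hri, p, s, rfl, by simp [hro]⟩
    convert (hstep.trans (ih₁ p _)).trans (ih₂ (p ++ w₁) s) using 2 <;> simp

lemma LmTrace.exists_derivation (hrules : PairOrTerminalRules rs) {p w : List T}
    {X : Option (Bracket k)} {s : List (Symbol T (Option (Bracket k)))}
    {l : List (Option (Bracket k))}
    (h : LmTrace (bracketGrammar k rs) (p.map Symbol.terminal ++ Symbol.nonterminal X :: s)
      (w.map Symbol.terminal) l) :
    ∃ d w₁ l', l = X :: (d.map some ++ l') ∧ Derivation rs X d w₁ ∧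
      LmTrace (bracketGrammar k rs) ((p ++ w₁).map Symbol.terminal ++ s)
        (w.map Symbol.terminal) l' := by
  induction hn : l.length using Nat.strong_induction_on generalizing l X p s with
  | _ n ih =>
    obtain ⟨r, hr, rfl, l, rfl, htr⟩ := h.exists_first_rule
    rcases hrules r hr with ⟨i, hro⟩ | ⟨a, hro⟩
    · rw [hro] at htr
      obtain ⟨d₁, w₁, l₁, rfl, h₁, htr₁⟩ :=
        ih l.length (by simp [← hn]) (s := _ :: s) (by simpa using htr) rfl
      obtain ⟨d₂, w₂, l₂, rfl, h₂, htr₂⟩ := ih _ (by simp [← hn]; omega) htr₁ rfl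
      exact ⟨_, _, l₂, by simp, .pair ⟨r, hr, rfl, hro⟩ h₁ h₂, by simpa using htr₂⟩
    · rw [hro] at htr
      exact ⟨[], [a], l, rfl, .terminal ⟨r, hr, rfl, hro⟩, by simpa using htr⟩

lemma lmTrace_iff_derivation (hrules : PairOrTerminalRules rs) {X : Option (Bracket k)}
    {d : List (Bracket k)} {w : List T} :
    LmTrace (bracketGrammar k rs) [Symbol.nonterminal X] (w.map Symbol.terminal)
      (X :: d.map some) ↔ Derivation rs X d w := by
  refine ⟨fun h => ?_, fun h => by simpa using h.lmTrace [] []⟩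
  obtain ⟨d', w', l, hl, hd', htr⟩ := LmTrace.exists_derivation hrules (p := []) (s := []) h
  rw [List.nil_append, List.append_nil] at htr
  obtain ⟨rfl, hw⟩ := htr.eq_of_map_terminal
  simp only [List.append_nil, List.cons.injEq, true_and] at hl
  obtain rfl : d = d' := List.map_injective_iff.2 (Option.some_injective _) hl
  obtain rfl : w = w' := List.map_injective_iff.2 (fun _ _ => Symbol.terminal.inj) hw
  exact hd'

theorem exists_isTraceWord_iff (hrules : PairOrTerminalRules rs) {d : List (Bracket k)} :
    (∃ w, IsTraceWord (bracketGrammar k rs) w (d.map some)) ↔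
      IsDyck d ∧ Admissible rs none d := by
  simp only [IsTraceWord, ne_eq, List.map_eq_nil_iff, lmTrace_iff_derivation hrules,
    exists_and_left, exists_derivation_iff, isDyckOrNil_iff]
  exact ⟨fun ⟨hne, hd, hX⟩ => ⟨hd.resolve_left hne, hX⟩,
    fun ⟨hd, hX⟩ => ⟨hd.ne_nil, .inr hd, hX⟩⟩

end TraceWords

theorem _root_.List.forall₂_append_left_iff {α β : Type*} {R : α → β → Prop}
    {a c : List α} {l : List β} :
    List.Forall₂ R (a ++ c) l ↔
      ∃ la lc, l = la ++ lc ∧ List.Forall₂ R a la ∧ List.Forall₂ R c lc := by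
  refine ⟨fun h => ⟨_, _, (List.take_append_drop a.length l).symm, ?_, ?_⟩, ?_⟩
  · simpa using List.forall₂_take a.length h
  · simpa using List.forall₂_drop a.length h
  · rintro ⟨la, lc, rfl, ha, hc⟩
    exact List.rel_append ha hc

section Language

variable {k : ℕ} {rs : Finset (ContextFreeRule T (Option (Bracket k)))}

variable (rs) in
def SymbolYields : Symbol T (Option (Bracket k)) → List T → Prop
  | .terminal a, w => w = [a]
  | .nonterminal X, w => ∃ d, Derivation rs X d w

lemma symbolYields_of_mem (hrules : PairOrTerminalRules rs)
    {r : ContextFreeRule T (Option (Bracket k))} (hr : r ∈ rs) {ws : List (List T)} (h : List.Forall₂ (SymbolYields rs) r.output ws) :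
    SymbolYields rs (.nonterminal r.input) ws.flatten := by
  rcases hrules r hr with ⟨i, hro⟩ | ⟨a, hro⟩ <;> rw [hro] at h
  · rcases h with _ | ⟨⟨d₁, h₁⟩, _ | ⟨⟨d₂, h₂⟩, _ | _⟩⟩
    exact ⟨_, by simpa using Derivation.pair ⟨r, hr, rfl, hro⟩ h₁ h₂⟩
  · rcases h with _ | ⟨rfl, _ | _⟩
    exact ⟨[], .terminal ⟨r, hr, rfl, hro⟩⟩

lemma exists_forall₂_symbolYields (hrules : PairOrTerminalRules rs)
    {u : List (Symbol T (Option (Bracket k)))} {w : List T}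
    (h : (bracketGrammar k rs).Derives u (w.map Symbol.terminal)) :
    ∃ ws, w = ws.flatten ∧ List.Forall₂ (SymbolYields rs) u ws := by
  induction h using Relation.ReflTransGen.head_induction_on with
  | refl =>
    induction w with
    | nil => exact ⟨[], rfl, .nil⟩
    | cons a w ih =>
      obtain ⟨ws, rfl, hws⟩ := ih
      exact ⟨[a] :: ws, rfl, .cons rfl hws⟩
  | head hstep _ ih =>
    obtain ⟨ws, rfl, hws⟩ := ih
    obtain ⟨r, hr, hrw⟩ := hstep
    obtain ⟨p, q, rfl, rfl⟩ := ContextFreeRule.rewrites_iff.1 hrw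
    obtain ⟨_, wq, rfl, hpo, hq⟩ := List.forall₂_append_left_iff.1 hws
    obtain ⟨wp, wo, rfl, hp, ho⟩ := List.forall₂_append_left_iff.1 hpo
    refine ⟨wp ++ [wo.flatten] ++ wq, by simp, ?_⟩
    exact List.rel_append (List.rel_append hp (.cons (symbolYields_of_mem hrules hr ho) .nil)) hq

lemma mem_language_iff_exists_derivation (hrules : PairOrTerminalRules rs) {w : List T} :
    w ∈ (bracketGrammar k rs).language ↔ ∃ d, Derivation rs none d w := by
  rw [ContextFreeGrammar.mem_language_iff]
  refine ⟨fun h => ?_, fun ⟨d, h⟩ => by simpa using (h.lmTrace [] []).derives⟩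
  obtain ⟨_, rfl, _ | ⟨hw, _ | _⟩⟩ := exists_forall₂_symbolYields hrules h
  simpa [SymbolYields] using hw

lemma not_terminalRule_of_hasPairRule (hg : IsDyckNF (bracketGrammar k rs)) {b : Bracket k}
    {i : Fin k} (h : HasPairRule rs (some b) i) (a : T) :
    ¬ TerminalRule (bracketGrammar k rs) (some b) a := by
  rintro ⟨r', hr', hri', hro'⟩
  obtain ⟨r, hr, hri, hro⟩ := h
  obtain rfl : r = r' := hg.2.1 r' hr' a hro' (by simp [hri']) r hr (hri.trans hri'.symm)
  simp [hro'] at hro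

variable (rs) in
def ReadsTerminals (φ : Bracket k → List T) : Prop :=
  ∀ b : Bracket k,
    (∀ a : T, TerminalRule (bracketGrammar k rs) (some b) a → φ b = [a]) ∧
    ((¬ ∃ a : T, TerminalRule (bracketGrammar k rs) (some b) a) → φ b = [])

lemma Derivation.elim_append_flatMap (hg : IsDyckNF (bracketGrammar k rs))
    (hS : ¬ RewritesToTerminal (bracketGrammar k rs) none) {φ : Bracket k → List T}
    (hφ : ReadsTerminals rs φ) {X : Option (Bracket k)} {d : List (Bracket k)} {w : List T}
    (h : Derivation rs X d w) : X.elim [] φ ++ d.flatMap φ = w := by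
  induction h with
  | @terminal X a h =>
    cases X with
    | none =>
      obtain ⟨r, hr, hri, hra⟩ := h
      exact absurd ⟨r, hr, hri, a, hra⟩ hS
    | some b => simp [(hφ b).1 a h]
  | @pair X i d₁ d₂ w₁ w₂ h _ _ ih₁ ih₂ =>
    have hX : X.elim [] φ = [] := by
      cases X with
      | none => rfl
      | some b => exact (hφ b).2 fun ⟨a, ha⟩ => not_terminalRule_of_hasPairRule hg h a ha
    simp only [Option.elim] at ih₁ ih₂
    simp [hX, ← ih₁, ← ih₂]

theorem mem_language_iff_exists_isDyck (hg : IsDyckNF (bracketGrammar k rs))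
    (hrules : PairOrTerminalRules rs) (hS : ¬ RewritesToTerminal (bracketGrammar k rs) none)
    {φ : Bracket k → List T} (hφ : ReadsTerminals rs φ) {w : List T} :
    w ∈ (bracketGrammar k rs).language ↔
      ∃ d, IsDyck d ∧ Admissible rs none d ∧ d.flatMap φ = w := by
  have flatMap_eq {d : List (Bracket k)} {w : List T} (h : Derivation rs none d w) :
      d.flatMap φ = w := by
    simpa using h.elim_append_flatMap hg hS hφ
  rw [mem_language_iff_exists_derivation hrules]
  constructor
  · rintro ⟨d, h⟩
    have hd : d ≠ [] := by
      rintro rfl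
      exact hS h.admissible
    exact ⟨d, (isDyckOrNil_iff.1 h.isDyckOrNil).resolve_left hd, h.admissible, flatMap_eq h⟩
  · rintro ⟨d, hd, hX, rfl⟩
    obtain ⟨w, h⟩ := exists_derivation_iff.2 ⟨hd.isDyckOrNil, hX⟩
    exact ⟨d, flatMap_eq h ▸ h⟩

end Language

/-- Let `G_k` be a grammar in Dyck normal form with nonterminals
`{S, [₁, …, [ₖ, ]₁, …, ]ₖ}` (two-nonterminal rules being of the form `X → [ᵢ ]ᵢ`) that has
no rule `S → t` with `t ∈ T ∪ {λ}`.  Then there is a regular language `R` over the `2k`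
brackets with `D_k ∩ R = 𝓛(G_k)` (the trace-language of `G_k`), and consequently
`L(G_k) = φ(D_k ∩ R)`, where `φ` maps each bracket rewritten to two nonterminals to `λ` and
each bracket `N` with a rule `N → t` to `t`. -/
theorem cs_regular_eq_traceLang {k : ℕ}
    (rs : Finset (ContextFreeRule T (Option (Bracket k))))
    (hg : IsDyckNF (bracketGrammar k rs))
    (hpairs : ∀ r ∈ rs,
      (∃ i : Fin k, r.output =
        [Symbol.nonterminal (some (i, true)), Symbol.nonterminal (some (i, false))]) ∨
      (∃ a : T, r.output = [Symbol.terminal a]))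
    (hax : ∀ r ∈ rs, r.input = none →
      (∀ a : T, r.output ≠ [Symbol.terminal a]) ∧ r.output ≠ []) :
    ∃ R : Language (Bracket k),
      R.IsRegular ∧
      (∀ d : List (Bracket k),
        (IsDyck d ∧ d ∈ R) ↔ ∃ w : List T, IsTraceWord (bracketGrammar k rs) w (d.map some)) ∧
      ∀ φ : Bracket k → List T,
        (∀ b : Bracket k,
          (∀ a : T, TerminalRule (bracketGrammar k rs) (some b) a → φ b = [a]) ∧
          ((¬ ∃ a : T, TerminalRule (bracketGrammar k rs) (some b) a) → φ b = [])) →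
        ∀ w : List T,
          w ∈ (bracketGrammar k rs).language ↔ ∃ d, IsDyck d ∧ d ∈ R ∧ d.flatMap φ = w := by
  have hS : ¬ RewritesToTerminal (bracketGrammar k rs) none :=
    fun ⟨r, hr, hri, a, hra⟩ => (hax r hr hri).1 a hra
  refine ⟨(traceDFA rs).accepts, ⟨_, inferInstance, traceDFA rs, rfl⟩, fun d => ?_,
    fun φ hφ w => ?_⟩
  · rw [mem_traceDFA_accepts_iff, exists_isTraceWord_iff hpairs]
  · simp only [mem_traceDFA_accepts_iff]
    exact mem_language_iff_exists_isDyck hg hpairs hS hφ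

end CS
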